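/- arXiv:1302.6338 — 7 statements merged into one kernel-verified Lean document; each statement's English description precedes it below -/
import Mathlib

section
/- Let i ∈ {0,1} and j ∈ {1,2}, and let G = (V, lab, args, r) be a λ-term-graph over Σλ^{i,j} with correct abstraction-prefix function P. Then access paths may end in variable vertices (label 0), but pass only through vertices in V(λ) ∪ V(@) ∪ V(S), and they depart from scope-delimiter vertices (label S) only via the 0-indexed edge. -/
/-! Common framework: term graphs over a signature, homomorphisms, bisimulations,
    access paths, λ-ho-term-graphs, λ-ap-ho-term-graphs, λ-term-graphs with
    scope delimiters, and the translation constructions. -/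

inductive Lab3 : Type
  | app | lam | var
  deriving DecidableEq

/-- Arity function of the signature Σλ^i = {@, λ, 0} with ar(@)=2, ar(λ)=1, ar(0)=i. -/
def ar3 (i : ℕ) : Lab3 → ℕ
  | .app => 2
  | .lam => 1
  | .var => i

inductive Lab4 : Type
  | app | lam | var | del
  deriving DecidableEq

/-- Arity function of Σλ^{i,j} = {@, λ, 0, S} with ar(@)=2, ar(λ)=1, ar(0)=i, ar(S)=j. -/
def ar4 (i j : ℕ) : Lab4 → ℕ
  | .app => 2
  | .lam => 1
  | .var => i
  | .del => j

def lab3to4 : Lab3 → Lab4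
  | .app => .app
  | .lam => .lam
  | .var => .var

def lab4to3 : Lab4 → Lab3
  | .app => .app
  | .lam => .lam
  | .var => .var
  | .del => .var

/-- A term graph over a signature: vertex labelling, argument (successor) lists of
    length matching the arity of the label, a root, and every vertex reachable
    from the root. -/
structure TermGraph (L : Type) (ar : L → ℕ) (V : Type) where
  lab : V → L
  args : V → List V
  root : V
  args_len : ∀ v, (args v).length = ar (lab v)
  reach : ∀ v, Relation.ReflTransGen (fun a b => b ∈ args a) root v

namespace TermGraph

variable {L V : Type} {ar : L → ℕ}

/-- `G.Succ k w w'` : `w'` is the `k`-th successor of `w` (the edge w ↣_k w'). -/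
def Succ (G : TermGraph L ar V) (k : ℕ) (w w' : V) : Prop :=
  (G.args w)[k]? = some w'

/-- `G.Edge w w'` : `w'` is some successor of `w` (the relation ↣). -/
def Edge (G : TermGraph L ar V) (w w' : V) : Prop :=
  w' ∈ G.args w

/-- Reachability ↠ along edges. -/
def Reaches (G : TermGraph L ar V) (w w' : V) : Prop :=
  Relation.ReflTransGen G.Edge w w'

end TermGraph

/-- Homomorphism (functional bisimulation) of term graphs. -/
def IsHom {L V₁ V₂ : Type} {ar : L → ℕ} (h : V₁ → V₂)
    (G₁ : TermGraph L ar V₁) (G₂ : TermGraph L ar V₂) : Prop :=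
  (∀ v, G₂.lab (h v) = G₁.lab v) ∧
  (∀ v, G₂.args (h v) = (G₁.args v).map h) ∧
  h G₁.root = G₂.root

/-- Bisimulation between term graphs: a term graph on a set of pairs, rooted at the
    pair of roots, whose two projections are homomorphisms. -/
def Bisim {L V₁ V₂ : Type} {ar : L → ℕ}
    (G₁ : TermGraph L ar V₁) (G₂ : TermGraph L ar V₂) : Prop :=
  ∃ (S : Set (V₁ × V₂)) (R : TermGraph L ar S),
    (R.root : V₁ × V₂) = (G₁.root, G₂.root) ∧
    IsHom (fun x : S => x.val.1) R G₁ ∧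
    IsHom (fun x : S => x.val.2) R G₂

/-- An access path of a vertex `w`: a path from the root to `w` (with edge indices)
    that visits no vertex twice. -/
structure AccessPath {L V : Type} {ar : L → ℕ} (G : TermGraph L ar V) (w : V) where
  n : ℕ
  vs : Fin (n + 1) → V
  ks : Fin n → ℕ
  start : vs 0 = G.root
  finish : vs (Fin.last n) = w
  step : ∀ m : Fin n, G.Succ (ks m) (vs m.castSucc) (vs m.succ)
  inj : Function.Injective vs

/-- The conditions (root), (self), (nest), (closed), (scope)₀ and (for i = 1) (scope)₁
    on a scope function. -/
def ScopeConds (i : ℕ) {V : Type} (G : TermGraph Lab3 (ar3 i) V)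
    (Sc : V → Set V) : Prop :=
  (∀ v, G.lab v = .lam → G.root ∉ Sc v \ {v}) ∧
  (∀ v, G.lab v = .lam → v ∈ Sc v) ∧
  (∀ v₀ v₁, G.lab v₀ = .lam → G.lab v₁ = .lam → v₁ ∈ Sc v₀ \ {v₀} →
      Sc v₁ ⊆ Sc v₀ \ {v₀}) ∧
  (∀ v w wk k, G.lab v = .lam → G.Succ k w wk → wk ∈ Sc v \ {v} → w ∈ Sc v) ∧
  (∀ w, G.lab w = .var → ∃ v, G.lab v = .lam ∧ w ∈ Sc v \ {v}) ∧
  (i = 1 → ∀ w w₀, G.lab w = .var → G.Succ 0 w w₀ →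
      G.lab w₀ = .lam ∧ ∀ v, G.lab v = .lam → (w ∈ Sc v ↔ w₀ ∈ Sc v))

/-- λ-ho-term-graph over Σλ^i: a Σλ^i-term-graph endowed with a scope function. -/
structure LamHoTG (i : ℕ) (V : Type) extends TermGraph Lab3 (ar3 i) V where
  Sc : V → Set V
  conds : ScopeConds i toTermGraph Sc

/-- Correctness of an abstraction-prefix function for a Σλ^i-term-graph:
    (root), (λ), (@), (0)₀, and (for i = 1) (0)₁. -/
def CorrectAP (i : ℕ) {V : Type} (G : TermGraph Lab3 (ar3 i) V)
    (P : V → List V) : Prop :=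
  (P G.root = []) ∧
  (∀ w w₀, G.lab w = .lam → G.Succ 0 w w₀ → P w₀ <+: P w ++ [w]) ∧
  (∀ w wk k, G.lab w = .app → G.Succ k w wk → P wk <+: P w) ∧
  (∀ w, G.lab w = .var → P w ≠ []) ∧
  (i = 1 → ∀ w w₀, G.lab w = .var → G.Succ 0 w w₀ →
      G.lab w₀ = .lam ∧ P w₀ ++ [w₀] = P w)

/-- λ-ap-ho-term-graph over Σλ^i: a Σλ^i-term-graph endowed with a correct
    abstraction-prefix function. -/
structure LamApHoTG (i : ℕ) (V : Type) extends TermGraph Lab3 (ar3 i) V where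
  P : V → List V
  correct : CorrectAP i toTermGraph P

/-- `ScToP G Sc P` : the abstraction-prefix function `P` is the one obtained from the
    scope function `Sc` by the mapping A_i: for each vertex `w`, `P w` lists exactly
    the binders of `w` other than `w` itself, in order of strictly decreasing scopes. -/
def ScToP {i : ℕ} {V : Type} (G : TermGraph Lab3 (ar3 i) V)
    (Sc : V → Set V) (P : V → List V) : Prop :=
  ∀ w, (∀ v, v ∈ P w ↔ (G.lab v = .lam ∧ w ∈ Sc v ∧ v ≠ w)) ∧
    (P w).Chain' (fun a b => Sc b ⊂ Sc a)

/-- The scope function obtained from an abstraction-prefix function by the mapping B_i: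
    Sc(v) = { w | v occurs in P(w) } ∪ {v}. -/
def ScOfP {V : Type} (P : V → List V) : V → Set V :=
  fun v => {w | v ∈ P w} ∪ {v}

/-- Homomorphism of λ-ho-term-graphs (given by their underlying term graphs and
    scope functions). -/
def IsHoHom {i : ℕ} {V₁ V₂ : Type} (h : V₁ → V₂)
    (G₁ : TermGraph Lab3 (ar3 i) V₁) (Sc₁ : V₁ → Set V₁)
    (G₂ : TermGraph Lab3 (ar3 i) V₂) (Sc₂ : V₂ → Set V₂) : Prop :=
  IsHom h G₁ G₂ ∧ ∀ v, G₁.lab v = .lam → h '' Sc₁ v = Sc₂ (h v)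

/-- Homomorphism of λ-ap-ho-term-graphs (given by their underlying term graphs and
    abstraction-prefix functions). -/
def IsApHom {i : ℕ} {V₁ V₂ : Type} (h : V₁ → V₂)
    (G₁ : TermGraph Lab3 (ar3 i) V₁) (P₁ : V₁ → List V₁)
    (G₂ : TermGraph Lab3 (ar3 i) V₂) (P₂ : V₂ → List V₂) : Prop :=
  IsHom h G₁ G₂ ∧ ∀ v, (P₁ v).map h = P₂ (h v)

/-- Correctness of an abstraction-prefix function for a Σλ^{i,j}-term-graph:
    (root), (λ), (@), (0)₀, (0)₁ (for i = 1), (S)₁, and (S)₂ (for j = 2). -/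
def CorrectAP4 (i j : ℕ) {V : Type} (G : TermGraph Lab4 (ar4 i j) V)
    (P : V → List V) : Prop :=
  (P G.root = []) ∧
  (∀ w w₀, G.lab w = .lam → G.Succ 0 w w₀ → P w₀ = P w ++ [w]) ∧
  (∀ w wk k, G.lab w = .app → G.Succ k w wk → P wk = P w) ∧
  (∀ w, G.lab w = .var → P w ≠ []) ∧
  (i = 1 → ∀ w w₀, G.lab w = .var → G.Succ 0 w w₀ →
      G.lab w₀ = .lam ∧ P w₀ ++ [w₀] = P w) ∧
  (∀ w w₀, G.lab w = .del → G.Succ 0 w w₀ → ∃ v, P w₀ ++ [v] = P w) ∧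
  (j = 2 → ∀ w w₁, G.lab w = .del → G.Succ 1 w w₁ →
      G.lab w₁ = .lam ∧ P w₁ ++ [w₁] = P w)

/-- Vertex-set predicate of the construction G_i^j: original vertices (inl) together
    with scope-delimiter vertices (w, k, w', p) inserted along an edge w ↣_k w',
    one for each prefix p with P(w') < p ≤ P(w)·w (for λ-vertices w),
    resp. P(w') < p ≤ P(w) (for @-vertices w). -/
def GVP {i : ℕ} {V : Type} (G : TermGraph Lab3 (ar3 i) V) (P : V → List V) :
    V ⊕ (V × ℕ × V × List V) → Prop
  | .inl _ => True
  | .inr (w, k, w', p) =>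
      G.Succ k w w' ∧ P w' <+: p ∧ P w' ≠ p ∧
      ((G.lab w = .lam ∧ p <+: P w ++ [w]) ∨ (G.lab w = .app ∧ p <+: P w))

/-- Vertex set of the image of G_i^j. -/
def GVert {i : ℕ} {V : Type} (G : TermGraph Lab3 (ar3 i) V) (P : V → List V) : Type :=
  { x : V ⊕ (V × ℕ × V × List V) // GVP G P x }

/-- Labelling of the image of G_i^j: original labels on original vertices,
    `S` on the inserted delimiter vertices. -/
def GLab {i : ℕ} {V : Type} (G : TermGraph Lab3 (ar3 i) V) (P : V → List V)
    (x : GVert G P) : Lab4 :=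
  match x.val with
  | .inl w => lab3to4 (G.lab w)
  | .inr _ => .del

/-- The successor relation of the image of G_i^j (clauses as in the definition of
    the mapping G_i^j; for j = 2 the inserted S-vertices carry a 1-indexed back-link
    to the abstraction vertex whose extended scope they close). -/
def CSucc {i : ℕ} {V : Type} (j : ℕ) (G : TermGraph Lab3 (ar3 i) V) (P : V → List V)
    (k : ℕ) (x y : GVert G P) : Prop :=
  (∃ w wk, x.val = .inl w ∧ y.val = .inl wk ∧ G.Succ k w wk ∧
     (G.lab w = .var ∨ (G.lab w = .lam ∧ P wk = P w ++ [w]) ∨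
      (G.lab w = .app ∧ P wk = P w))) ∨
  (∃ w w₀, x.val = .inl w ∧ G.lab w = .lam ∧ G.Succ 0 w w₀ ∧ P w₀ ≠ P w ++ [w] ∧
     k = 0 ∧ y.val = .inr (w, 0, w₀, P w ++ [w])) ∨
  (∃ w wk, x.val = .inl w ∧ G.lab w = .app ∧ G.Succ k w wk ∧ P wk ≠ P w ∧
     y.val = .inr (w, k, wk, P w)) ∨
  (∃ w k' w' p v, x.val = .inr (w, k', w', p ++ [v]) ∧ k = 0 ∧ P w' ≠ p ∧
     y.val = .inr (w, k', w', p)) ∨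
  (∃ w k' w' v, x.val = .inr (w, k', w', P w' ++ [v]) ∧ k = 0 ∧ y.val = .inl w') ∨
  (j = 2 ∧ ∃ w k' w' p v, x.val = .inr (w, k', w', p ++ [v]) ∧ k = 1 ∧ y.val = .inl v)

/-- `IsGImage i j G P G'` : the Σλ^{i,j}-term-graph `G'` is the image of the
    λ-ap-ho-term-graph given by `G` and `P` under the mapping G_i^j. -/
def IsGImage (i j : ℕ) {V : Type} (G : TermGraph Lab3 (ar3 i) V) (P : V → List V)
    (G' : TermGraph Lab4 (ar4 i j) (GVert G P)) : Prop :=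
  (G'.root).val = .inl G.root ∧
  (∀ x, G'.lab x = GLab G P x) ∧
  (∀ k x y, G'.Succ k x y ↔ CSucc j G P k x y)

/-- One step along the 0-indexed edge of a scope-delimiter vertex. -/
def DelStep {i j : ℕ} {V : Type} (G : TermGraph Lab4 (ar4 i j) V) (a b : V) : Prop :=
  G.lab a = .del ∧ G.Succ 0 a b

/-- The non-delimiter vertices of a Σλ^{i,j}-term-graph. -/
def NVert {i j : ℕ} {V : Type} (G : TermGraph Lab4 (ar4 i j) V) : Type :=
  { v : V // G.lab v ≠ .del }

/-- `IsNImage i j G P G' P'` : the Σλ^i-term-graph `G'` with abstraction-prefix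
    function `P'` is the image of the λ-term-graph `G` (with correct prefix
    function `P`) under the mapping N_i^j: S-vertices are deleted, labels and the
    prefix function are restricted, the root is kept, and w₀ ↣'_k w₁ holds iff
    w₁ is reached from the k-th successor of w₀ by passing through finitely many
    S-vertices along their 0-indexed edges. -/
def IsNImage (i j : ℕ) {V : Type} (G : TermGraph Lab4 (ar4 i j) V) (P : V → List V)
    (G' : TermGraph Lab3 (ar3 i) (NVert G)) (P' : NVert G → List (NVert G)) : Prop :=
  (G'.root).val = G.root ∧
  (∀ x : NVert G, G'.lab x = lab4to3 (G.lab x.val)) ∧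
  (∀ k (a b : NVert G), G'.Succ k a b ↔
      ∃ u, G.Succ k a.val u ∧ Relation.ReflTransGen (DelStep G) u b.val) ∧
  (∀ v : NVert G, (P' v).map Subtype.val = P v.val)

/-- A λ-term-graph over Σλ^{1,2} (given by `G` with correct prefix function `P`) is
    fully back-linked if the last vertex of the abstraction prefix of any vertex `w`
    is reachable from `w`. -/
def FullyBackLinked {V : Type} (G : TermGraph Lab4 (ar4 1 2) V)
    (P : V → List V) : Prop :=
  ∀ w v p, P w = p ++ [v] → G.Reaches w v

/-- Eager-scope: whenever P(w) = p·v there is a path from `w` to `v` which ends with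
    a 0-indexed edge from a variable vertex to `v`, and all of whose intermediate
    vertices have abstraction prefixes extending P(w). -/
def EagerScope {V : Type} (G : TermGraph Lab4 (ar4 1 2) V)
    (P : V → List V) : Prop :=
  ∀ w v p, P w = p ++ [v] →
    ∃ (n : ℕ) (u : Fin (n + 1) → V),
      u 0 = w ∧
      (∀ m : Fin n, G.Edge (u m.castSucc) (u m.succ)) ∧
      G.Succ 0 (u (Fin.last n)) v ∧
      G.lab (u (Fin.last n)) = .var ∧
      ∀ m : Fin (n + 1), m ≠ 0 → P w <+: P (u m)

/-! Each edge w ↣ w' of a λ-term-graph gives P(w') ⊆ P(w)·w, so along any path from the root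
the abstraction prefix of a vertex consists of vertices visited before it. The edges that leave
variable vertices and the 1-indexed edges that leave scope delimiters point to a vertex of the
source's prefix, i.e. back to a vertex already visited, which an access path never does. -/

theorem TermGraph.Succ.lt_ar {L V : Type} {ar : L → ℕ} {G : TermGraph L ar V} {k : ℕ}
    {w w' : V} (h : G.Succ k w w') : k < ar (G.lab w) :=
  G.args_len w ▸ (List.getElem?_eq_some_iff.mp h).1

namespace CorrectAP4

variable {i j : ℕ} {V : Type} {G : TermGraph Lab4 (ar4 i j) V} {P : V → List V}

theorem mem_prefix_of_succ (hP : CorrectAP4 i j G P) (hi : i ≤ 1) (hj : j ≤ 2) {k : ℕ}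
    {w w' v : V} (h : G.Succ k w w') (hv : v ∈ P w') : v ∈ P w ∨ v = w := by
  obtain ⟨-, hlam, happ, -, hvar, hdel₀, hdel₁⟩ := hP
  have hk := h.lt_ar
  cases hl : G.lab w <;> rw [hl] at hk <;> simp only [ar4] at hk
  case app => exact .inl (happ w w' k hl h ▸ hv)
  case lam =>
    obtain rfl : k = 0 := by omega
    simpa [hlam w w' hl h] using hv
  case var =>
    obtain rfl : k = 0 := by omega
    obtain ⟨-, he⟩ := hvar (by omega) w w' hl h
    exact .inl (he ▸ List.mem_append_left _ hv)
  case del =>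
    obtain rfl | rfl : k = 0 ∨ k = 1 := by omega
    · obtain ⟨_, he⟩ := hdel₀ w w' hl h
      exact .inl (he ▸ List.mem_append_left _ hv)
    · obtain ⟨-, he⟩ := hdel₁ (by omega) w w' hl h
      exact .inl (he ▸ List.mem_append_left _ hv)

theorem succ_mem_prefix_of_var (hP : CorrectAP4 i j G P) (hi : i ≤ 1) {k : ℕ} {w w' : V}
    (hl : G.lab w = .var) (h : G.Succ k w w') : w' ∈ P w := by
  obtain ⟨-, -, -, -, hvar, -, -⟩ := hP
  have hk : k < i := by simpa only [hl, ar4] using h.lt_ar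
  obtain rfl : k = 0 := by omega
  obtain ⟨-, he⟩ := hvar (by omega) w w' hl h
  exact he ▸ List.mem_append_right _ (List.mem_singleton_self w')

theorem succ_mem_prefix_of_del (hP : CorrectAP4 i j G P) (hj : j ≤ 2) {k : ℕ} {w w' : V}
    (hl : G.lab w = .del) (h : G.Succ k w w') (hk₀ : k ≠ 0) : w' ∈ P w := by
  obtain ⟨-, -, -, -, -, -, hdel₁⟩ := hP
  have hk : k < j := by simpa only [hl, ar4] using h.lt_ar
  obtain rfl : k = 1 := by omega
  obtain ⟨-, he⟩ := hdel₁ (by omega) w w' hl h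
  exact he ▸ List.mem_append_right _ (List.mem_singleton_self w')

theorem exists_lt_of_mem_prefix (hP : CorrectAP4 i j G P) (hi : i ≤ 1) (hj : j ≤ 2) {w : V}
    (p : AccessPath G w) (m : Fin (p.n + 1)) {v : V} (hv : v ∈ P (p.vs m)) :
    ∃ t < m, p.vs t = v := by
  induction m using Fin.induction generalizing v with
  | zero =>
    rw [p.start, hP.1] at hv
    exact absurd hv List.not_mem_nil
  | succ m ih =>
    rcases hP.mem_prefix_of_succ hi hj (p.step m) hv with hv | rfl
    · obtain ⟨t, ht, rfl⟩ := ih hv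
      exact ⟨t, ht.trans m.castSucc_lt_succ, rfl⟩
    · exact ⟨m.castSucc, m.castSucc_lt_succ, rfl⟩

theorem succ_not_mem_prefix (hP : CorrectAP4 i j G P) (hi : i ≤ 1) (hj : j ≤ 2) {w : V}
    (p : AccessPath G w) (m : Fin p.n) : p.vs m.succ ∉ P (p.vs m.castSucc) := fun hmem => by
  obtain ⟨t, ht, heq⟩ := hP.exists_lt_of_mem_prefix hi hj p m.castSucc hmem
  exact (ht.trans m.castSucc_lt_succ).ne (p.inj heq)

end CorrectAP4

/-- Lemma 5.3(iv): in a λ-term-graph over Σλ^{i,j}, access paths may end in variable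
    vertices, but pass only through vertices in V(λ) ∪ V(@) ∪ V(S), and they depart
    from scope-delimiter vertices only via the 0-indexed edge. -/
theorem ltg_access_paths :
    ∀ i ∈ ({0, 1} : Set ℕ), ∀ j ∈ ({1, 2} : Set ℕ),
      ∀ (V : Type) (G : TermGraph Lab4 (ar4 i j) V) (P : V → List V),
        CorrectAP4 i j G P →
        ∀ (w : V) (p : AccessPath G w) (m : Fin p.n),
          (G.lab (p.vs m.castSucc) = Lab4.lam ∨ G.lab (p.vs m.castSucc) = Lab4.app ∨
           G.lab (p.vs m.castSucc) = Lab4.del) ∧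
          (G.lab (p.vs m.castSucc) = Lab4.del → p.ks m = 0) := by
  intro i hi j hj V G P hP w p m
  simp only [Set.mem_insert_iff, Set.mem_singleton_iff] at hi hj
  have hi : i ≤ 1 := by omega
  have hj : j ≤ 2 := by omega
  have hback := hP.succ_not_mem_prefix hi hj p m
  refine ⟨?_, fun hdel => ?_⟩
  · cases hl : G.lab (p.vs m.castSucc)
    case var => exact absurd (hP.succ_mem_prefix_of_var hi hl (p.step m)) hback
    all_goals simp
  · by_contra hk
    exact hback (hP.succ_mem_prefix_of_del hj hdel (p.step m) hk)
end

section
/- Let i ∈ {0,1} and j ∈ {1,2}. Every λ-term-graph G over Σλ^{i,j} admits exactly one correct abstraction-prefix function: if P and P' are both correct abstraction-prefix functions for G, then P = P'. -/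
/-- Lemma 5.3(v): every λ-term-graph over Σλ^{i,j} admits exactly one correct
    abstraction-prefix function. -/
theorem ltg_unique_correct_prefix_function :
    ∀ i ∈ ({0, 1} : Set ℕ), ∀ j ∈ ({1, 2} : Set ℕ),
      ∀ (V : Type) (G : TermGraph Lab4 (ar4 i j) V) (P P' : V → List V),
        CorrectAP4 i j G P → CorrectAP4 i j G P' → P = P' := by
  rintro i hi j hj V G P P' hP hP'
  funext v
  induction G.reach v with
  | refl => rw [hP.1, hP'.1]
  | tail _ hmem ih =>
    rename_i a b _
    obtain ⟨k, hk, hget⟩ := List.mem_iff_getElem.mp hmem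
    have hsucc : G.Succ k a b := by
      simp [TermGraph.Succ, List.getElem?_eq_getElem hk, hget]
    have hlen := G.args_len a
    cases hlab : G.lab a with
    | app =>
      rw [hP.2.2.1 a b k hlab hsucc, hP'.2.2.1 a b k hlab hsucc, ih]
    | lam =>
      have hk0 : k = 0 := by
        rw [hlen, hlab] at hk; simp [ar4] at hk; omega
      subst hk0
      rw [hP.2.1 a b hlab hsucc, hP'.2.1 a b hlab hsucc, ih]
    | var =>
      rw [hlen, hlab] at hk
      have hi1 : i = 1 := by
        rcases hi with h | h
        · subst h; simp [ar4] at hk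
        · exact h
      have hk0 : k = 0 := by simp [ar4, hi1] at hk; omega
      subst hk0
      have h1 := (hP.2.2.2.2.1 hi1 a b hlab hsucc).2
      have h2 := (hP'.2.2.2.2.1 hi1 a b hlab hsucc).2
      have : P b ++ [b] = P' b ++ [b] := by rw [h1, h2, ih]
      simpa using this
    | del =>
      rw [hlen, hlab] at hk
      rcases Nat.lt_or_ge k 1 with hk1 | hk1
      · have hk0 : k = 0 := by omega
        subst hk0
        obtain ⟨u, hu⟩ := hP.2.2.2.2.2.1 a b hlab hsucc
        obtain ⟨u', hu'⟩ := hP'.2.2.2.2.2.1 a b hlab hsucc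
        have e1 : P b = (P a).dropLast := by
          rw [← hu]; simp
        have e2 : P' b = (P' a).dropLast := by
          rw [← hu']; simp
        rw [e1, e2, ih]
      · have hj2 : j = 2 := by
          rcases hj with h | h
          · subst h; simp [ar4] at hk; omega
          · exact h
        have hk1' : k = 1 := by simp [ar4, hj2] at hk; omega
        subst hk1'
        have h1 := (hP.2.2.2.2.2.2 hj2 a b hlab hsucc).2
        have h2 := (hP'.2.2.2.2.2.2 hj2 a b hlab hsucc).2
        have : P b ++ [b] = P' b ++ [b] := by rw [h1, h2, ih]
        simpa using this
end

section
/- Let i ∈ {0,1} and j ∈ {1,2}. The mapping G_i^j from λ-ap-ho-term-graphs over Σλ^i to λ-term-graphs over Σλ^{i,j}, which inserts between any vertex w and its k-th successor w_k a chain of n scope-delimiter vertices labelled S whenever the abstraction prefix decreases by n from w to w_k (where n = |P(w)| − |P(w_k)| for application vertices w, n = |P(w)| + 1 − |P(w_k)| for abstraction vertices w; each inserted S-vertex passes to the next via its 0-indexed edge, and for j = 2 additionally carries a 1-indexed back-link edge to the abstraction vertex whose extended scope it closes), is well defined: its image is always a λ-term-graph over Σλ^{i,j}, i.e. the resulting Σλ^{i,j}-term-graph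 admits a correct abstraction-prefix function. -/
/-! The image is built explicitly. The `k`-th successor of an original vertex `w` with
`w ↣_k w'` is the entry of the delimiter chain along that edge at prefix `P(w)·w` (for `λ`)
or `P(w)` (for `@`); a delimiter recording the prefix `p·v` passes to the one recording `p`,
or to `w'` once `p = P(w')`, and (for `j = 2`) back-links to `v`. Every vertex is reached along
such chains.

Each vertex of the image gets the prefix it records. All conditions except (S)₂ are then
immediate from the correctness of `P`; (S)₂ asks that `v` be an abstraction vertex with
prefix `p`. This holds because every initial segment `p·v` of an abstraction prefix has this
property: it is true at the root and preserved along edges by the correctness of `P`. -/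

namespace TermGraph

variable {L V : Type} {ar : L → ℕ} {G : TermGraph L ar V}

theorem Succ.lt_ar_s12 {k : ℕ} {w w' : V} (h : G.Succ k w w') : k < ar (G.lab w) :=
  G.args_len w ▸ (List.getElem?_eq_some_iff.mp h).1

theorem exists_succ_of_mem_args {w w' : V} (h : w' ∈ G.args w) : ∃ k, G.Succ k w w' :=
  List.mem_iff_getElem?.mp h

theorem Succ.eq_zero_of_lab_eq_lam {i k : ℕ} {G : TermGraph Lab3 (ar3 i) V} {w w' : V}
    (h : G.Succ k w w') (hw : G.lab w = .lam) : k = 0 := by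
  simpa [hw, ar3] using h.lt_ar_s12

end TermGraph

section BinderChain

variable {i : ℕ} {V : Type} {G : TermGraph Lab3 (ar3 i) V} {P : V → List V}

def IsBinderChain (G : TermGraph Lab3 (ar3 i) V) (P : V → List V) (q : List V) : Prop :=
  ∀ p v, p ++ [v] <+: q → G.lab v = .lam ∧ P v = p

theorem IsBinderChain.of_prefix {q q' : List V} (h : IsBinderChain G P q) (hq : q' <+: q) :
    IsBinderChain G P q' :=
  fun p v hp => h p v (hp.trans hq)

theorem IsBinderChain.concat {q : List V} {w : V} (h : IsBinderChain G P q)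
    (hw : G.lab w = .lam) (hP : P w = q) : IsBinderChain G P (q ++ [w]) := by
  intro p v hp
  rcases List.prefix_concat_iff.mp hp with heq | hp
  · obtain ⟨rfl, hv⟩ := List.append_inj' heq rfl
    cases hv
    exact ⟨hw, hP⟩
  · exact h p v hp

theorem isBinderChain_nil : IsBinderChain G P [] :=
  fun p v hp => by simp [List.prefix_nil] at hp

/-- For `i ≤ 1` a variable vertex either has no successor or its successor is the binder
ending its prefix, by (0)₁. -/
theorem CorrectAP.isBinderChain (hi : i ≤ 1) (hc : CorrectAP i G P) (w : V) :
    IsBinderChain G P (P w) := by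
  induction G.reach w with
  | refl => exact hc.1 ▸ isBinderChain_nil
  | tail _ hbc ih =>
    rename_i b c _
    obtain ⟨k, hk⟩ := TermGraph.exists_succ_of_mem_args hbc
    cases hl : G.lab b with
    | lam =>
      obtain rfl := hk.eq_zero_of_lab_eq_lam hl
      exact (ih.concat hl rfl).of_prefix (hc.2.1 b c hl hk)
    | app => exact ih.of_prefix (hc.2.2.1 b c k hl hk)
    | var =>
      have hlt := hk.lt_ar_s12
      rw [hl, ar3] at hlt
      obtain rfl : i = 1 := by omega
      rw [Nat.lt_one_iff] at hlt
      subst hlt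
      exact ih.of_prefix ⟨[c], (hc.2.2.2.2 rfl b c hl hk).2⟩

end BinderChain

section RawVertices

variable {i : ℕ} {V : Type} (G : TermGraph Lab3 (ar3 i) V) (P : V → List V)

def rawPrefix : V ⊕ (V × ℕ × V × List V) → List V
  | .inl w => P w
  | .inr (_, _, _, p) => p

open Classical in
/-- The vertex carrying prefix `p` on the chain of delimiters inserted along `w ↣_k w'`;
the chain ends in `w'` itself, which carries `P w'`. -/
noncomputable def chainEntry (w : V) (k : ℕ) (w' : V) (p : List V) :
    V ⊕ (V × ℕ × V × List V) :=
  if P w' = p then .inl w' else .inr (w, k, w', p)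

/-- The prefix with which the edge `w ↣ w'` is entered, before it is peeled down to `P w'`;
for a variable vertex `w` no delimiters are inserted. -/
def openPrefix (w w' : V) : List V :=
  match G.lab w with
  | .lam => P w ++ [w]
  | .app => P w
  | .var => P w'

noncomputable def edgeTarget (w : V) (k : ℕ) (w' : V) : V ⊕ (V × ℕ × V × List V) :=
  chainEntry P w k w' (openPrefix G P w w')

variable {G P}

@[simp]
theorem rawPrefix_inl (w : V) : rawPrefix P (.inl w) = P w := rfl

@[simp]
theorem rawPrefix_inr (w : V) (k : ℕ) (w' : V) (p : List V) :
    rawPrefix P (.inr (w, k, w', p)) = p := rfl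

@[simp]
theorem rawPrefix_chainEntry (w : V) (k : ℕ) (w' : V) (p : List V) :
    rawPrefix P (chainEntry P w k w' p) = p := by
  unfold chainEntry
  split_ifs with h <;> simp [h]

theorem chainEntry_self (w : V) (k : ℕ) (w' : V) : chainEntry P w k w' (P w') = .inl w' :=
  if_pos rfl

theorem chainEntry_of_ne {w : V} {k : ℕ} {w' : V} {p : List V} (h : P w' ≠ p) :
    chainEntry P w k w' p = .inr (w, k, w', p) :=
  if_neg h

theorem gvp_inr_iff {w : V} {k : ℕ} {w' : V} {p : List V} :
    GVP G P (.inr (w, k, w', p)) ↔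
      G.Succ k w w' ∧ P w' <+: p ∧ P w' ≠ p ∧ p <+: openPrefix G P w w' := by
  unfold GVP openPrefix
  cases hl : G.lab w <;> simp only [hl, reduceCtorEq, true_and, false_and, or_false,
    false_or, and_false, or_self, false_iff, not_and]
  exact fun _ h₁ hne h₂ => hne (h₁.eq_of_length (le_antisymm h₁.length_le h₂.length_le))

theorem exists_eq_concat_of_gvp_inr {w : V} {k : ℕ} {w' : V} {p : List V}
    (h : GVP G P (.inr (w, k, w', p))) : ∃ q v, p = q ++ [v] := by
  obtain ⟨-, hpre, hne, -⟩ := h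
  rcases List.eq_nil_or_concat' p with rfl | hp
  · exact absurd (List.prefix_nil.mp hpre) hne
  · exact hp

theorem CorrectAP.prefix_openPrefix (hc : CorrectAP i G P) {k : ℕ} {w w' : V}
    (h : G.Succ k w w') : P w' <+: openPrefix G P w w' := by
  unfold openPrefix
  cases hl : G.lab w with
  | lam =>
    obtain rfl := h.eq_zero_of_lab_eq_lam hl
    exact hc.2.1 w w' hl h
  | app => exact hc.2.2.1 w w' k hl h
  | var => exact List.prefix_refl _

theorem gvp_chainEntry {k : ℕ} {w w' : V} {p : List V} (h : G.Succ k w w') (h₁ : P w' <+: p)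
    (h₂ : p <+: openPrefix G P w w') : GVP G P (chainEntry P w k w' p) := by
  unfold chainEntry
  split_ifs with he
  · trivial
  · exact gvp_inr_iff.mpr ⟨h, h₁, he, h₂⟩

theorem CorrectAP.gvp_edgeTarget (hc : CorrectAP i G P) {k : ℕ} {w w' : V}
    (h : G.Succ k w w') : GVP G P (edgeTarget G P w k w') :=
  gvp_chainEntry h (hc.prefix_openPrefix h) (List.prefix_refl _)

theorem csucc_inl_iff {j k : ℕ} {w : V} {x y : GVert G P} (hx : x.val = .inl w) :
    CSucc j G P k x y ↔ ∃ w', G.Succ k w w' ∧ y.val = edgeTarget G P w k w' := by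
  constructor
  · rintro (⟨w₁, w', hx', hy, hs, hlab⟩ | ⟨w₁, w', hx', hl, hs, hne, rfl, hy⟩ |
      ⟨w₁, w', hx', hl, hs, hne, hy⟩ | ⟨_, _, _, _, _, hx', -⟩ | ⟨_, _, _, _, hx', -⟩ |
      ⟨-, _, _, _, _, _, hx', -⟩) <;> rw [hx] at hx' <;> cases hx' <;> refine ⟨_, hs, ?_⟩
    · rcases hlab with hl | ⟨hl, he⟩ | ⟨hl, he⟩
      · simp [hy, edgeTarget, openPrefix, chainEntry, hl]
      all_goals simp [hy, edgeTarget, openPrefix, chainEntry, hl, he]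
    all_goals simp [hy, edgeTarget, openPrefix, chainEntry, hl, hne]
  · rintro ⟨w', hs, hy⟩
    simp only [edgeTarget, openPrefix, chainEntry] at hy
    cases hl : G.lab w with
    | var => exact Or.inl ⟨w, w', hx, by simpa [hl] using hy, hs, Or.inl hl⟩
    | lam =>
      obtain rfl := hs.eq_zero_of_lab_eq_lam hl
      by_cases he : P w' = P w ++ [w]
      · exact Or.inl ⟨w, w', hx, by simpa [hl, he] using hy, hs, Or.inr (Or.inl ⟨hl, he⟩)⟩
      · exact Or.inr (Or.inl ⟨w, w', hx, hl, hs, he, rfl, by simpa [hl, he] using hy⟩)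
    | app =>
      by_cases he : P w' = P w
      · exact Or.inl ⟨w, w', hx, by simpa [hl, he] using hy, hs, Or.inr (Or.inr ⟨hl, he⟩)⟩
      · exact Or.inr (Or.inr (Or.inl ⟨w, w', hx, hl, hs, he, by simpa [hl, he] using hy⟩))

theorem csucc_inr_iff {j k k' : ℕ} {w w' v : V} {p : List V} {x y : GVert G P}
    (hx : x.val = .inr (w, k', w', p ++ [v])) :
    CSucc j G P k x y ↔
      (k = 0 ∧ y.val = chainEntry P w k' w' p) ∨ (j = 2 ∧ k = 1 ∧ y.val = .inl v) := by
  constructor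
  · rintro (⟨_, _, hx', -⟩ | ⟨_, _, hx', -⟩ | ⟨_, _, hx', -⟩ |
      ⟨w₁, k₁, w₁', q, v₁, hx', rfl, hne, hy⟩ | ⟨w₁, k₁, w₁', v₁, hx', rfl, hy⟩ |
      ⟨hj, w₁, k₁, w₁', q, v₁, hx', rfl, hy⟩) <;> rw [hx] at hx' <;>
      simp only [reduceCtorEq, Sum.inr.injEq, Prod.mk.injEq] at hx'
    · obtain ⟨rfl, rfl, rfl, hp⟩ := hx'
      obtain ⟨rfl, -⟩ := List.append_inj' hp rfl
      exact Or.inl ⟨rfl, hy.trans (chainEntry_of_ne hne).symm⟩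
    · obtain ⟨rfl, rfl, rfl, hp⟩ := hx'
      obtain ⟨hp, -⟩ := List.append_inj' hp rfl
      exact Or.inl ⟨rfl, by rw [hy, hp, chainEntry_self]⟩
    · obtain ⟨rfl, rfl, rfl, hp⟩ := hx'
      obtain ⟨-, hv⟩ := List.append_inj' hp rfl
      simp only [List.cons.injEq, and_true] at hv
      exact Or.inr ⟨hj, rfl, hv ▸ hy⟩
  · rintro (⟨rfl, hy⟩ | ⟨hj, rfl, hy⟩)
    · unfold chainEntry at hy
      split_ifs at hy with he
      · exact Or.inr (Or.inr (Or.inr (Or.inr (Or.inl ⟨w, k', w', v, he ▸ hx, rfl, hy⟩))))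
      · exact Or.inr (Or.inr (Or.inr (Or.inl ⟨w, k', w', p, v, hx, rfl, he, hy⟩)))
    · exact Or.inr (Or.inr (Or.inr (Or.inr (Or.inr ⟨hj, w, k', w', p, v, hx, rfl, hy⟩))))

end RawVertices

section Correctness

variable {i j : ℕ} {V : Type} {G : TermGraph Lab3 (ar3 i) V} {P : V → List V}

variable (G P) in
def origVert (v : V) : GVert G P := ⟨.inl v, trivial⟩

@[simp]
theorem gLab_origVert (v : V) : GLab G P (origVert G P v) = lab3to4 (G.lab v) := rfl

variable (G P) in
def gPrefix (x : GVert G P) : List (GVert G P) := (rawPrefix P x.val).map (origVert G P)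

theorem exists_eq_origVert_of_gLab {x : GVert G P} {l : Lab3} (h : GLab G P x = lab3to4 l) :
    ∃ w, x = origVert G P w ∧ G.lab w = l := by
  obtain ⟨x | t, hx⟩ := x
  · refine ⟨x, rfl, ?_⟩
    cases hl : G.lab x <;> cases l <;> simp_all [GLab, lab3to4]
  · cases l <;> simp [GLab, lab3to4] at h

theorem exists_concat_of_gLab_eq_del {x : GVert G P} (h : GLab G P x = .del) :
    ∃ w k w' p v, x.val = .inr (w, k, w', p ++ [v]) := by
  obtain ⟨x | ⟨w, k, w', p⟩, hx⟩ := x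
  · cases hl : G.lab x <;> simp [GLab, lab3to4, hl] at h
  · obtain ⟨q, v, rfl⟩ := exists_eq_concat_of_gvp_inr hx
    exact ⟨w, k, w', q, v, rfl⟩

theorem CorrectAP.isBinderChain_of_gvp (hi : i ≤ 1) (hc : CorrectAP i G P) {w : V} {k : ℕ}
    {w' : V} {p : List V} (h : GVP G P (.inr (w, k, w', p))) : IsBinderChain G P p := by
  rcases h.2.2.2 with ⟨hl, hp⟩ | ⟨-, hp⟩
  · exact ((hc.isBinderChain hi w).concat hl rfl).of_prefix hp
  · exact (hc.isBinderChain hi w).of_prefix hp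

theorem CorrectAP.correctAP4_of_isGImage (hi : i ≤ 1) (hc : CorrectAP i G P)
    {G' : TermGraph Lab4 (ar4 i j) (GVert G P)} (hG' : IsGImage i j G P G') :
    CorrectAP4 i j G' (gPrefix G P) := by
  obtain ⟨hroot, hlab, hsucc⟩ := hG'
  refine ⟨?root, ?lam, ?app, ?var, ?var_backlink, ?del, ?del_backlink⟩
  case root => simp [gPrefix, hroot, hc.1]
  case lam =>
    intro x y hx hs
    obtain ⟨w, rfl, hw⟩ := exists_eq_origVert_of_gLab (l := .lam) ((hlab x).symm.trans hx)
    obtain ⟨w', -, hy⟩ := (csucc_inl_iff rfl).mp ((hsucc 0 _ y).mp hs)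
    simp [gPrefix, hy, edgeTarget, openPrefix, hw, origVert]
  case app =>
    intro x y k hx hs
    obtain ⟨w, rfl, hw⟩ := exists_eq_origVert_of_gLab (l := .app) ((hlab x).symm.trans hx)
    obtain ⟨w', -, hy⟩ := (csucc_inl_iff rfl).mp ((hsucc k _ y).mp hs)
    simp [gPrefix, hy, edgeTarget, openPrefix, hw, origVert]
  case var =>
    intro x hx
    obtain ⟨w, rfl, hw⟩ := exists_eq_origVert_of_gLab (l := .var) ((hlab x).symm.trans hx)
    simpa [gPrefix, origVert] using hc.2.2.2.1 w hw
  case var_backlink =>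
    intro hi1 x y hx hs
    obtain ⟨w, rfl, hw⟩ := exists_eq_origVert_of_gLab (l := .var) ((hlab x).symm.trans hx)
    obtain ⟨w', hs', hy⟩ := (csucc_inl_iff rfl).mp ((hsucc 0 _ y).mp hs)
    obtain ⟨hw', hP⟩ := hc.2.2.2.2 hi1 w w' hw hs'
    obtain rfl : y = origVert G P w' :=
      Subtype.ext (hy.trans (by simp [edgeTarget, openPrefix, hw, chainEntry_self, origVert]))
    refine ⟨by rw [hlab, gLab_origVert, hw']; rfl, ?_⟩
    simp [gPrefix, origVert, ← hP]
  case del =>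
    intro x y hx hs
    obtain ⟨w, k, w', p, v, hxv⟩ := exists_concat_of_gLab_eq_del ((hlab x).symm.trans hx)
    obtain ⟨-, hy⟩ | ⟨-, h, -⟩ := (csucc_inr_iff hxv).mp ((hsucc 0 x y).mp hs)
    · exact ⟨origVert G P v, by simp [gPrefix, hxv, hy]⟩
    · exact absurd h zero_ne_one
  case del_backlink =>
    intro _ x y hx hs
    obtain ⟨w, k, w', p, v, hxv⟩ := exists_concat_of_gLab_eq_del ((hlab x).symm.trans hx)
    obtain ⟨h, -⟩ | ⟨-, -, hy⟩ := (csucc_inr_iff hxv).mp ((hsucc 1 x y).mp hs)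
    · exact absurd h one_ne_zero
    obtain rfl : y = origVert G P v := Subtype.ext hy
    have hgvp : GVP G P (.inr (w, k, w', p ++ [v])) := hxv ▸ x.property
    obtain ⟨hv, hP⟩ := hc.isBinderChain_of_gvp hi hgvp p v (List.prefix_refl _)
    refine ⟨by rw [hlab, gLab_origVert, hv]; rfl, ?_⟩
    simp [gPrefix, hxv, origVert, hP]

end Correctness

section Construction

variable {i j : ℕ} {V : Type} {G : TermGraph Lab3 (ar3 i) V} {P : V → List V}

variable (G P) in
/-- The default of `getLastD` is never used: `GVP` forces `p ≠ []`. -/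
noncomputable def rawArgs (j : ℕ) :
    V ⊕ (V × ℕ × V × List V) → List (V ⊕ (V × ℕ × V × List V))
  | .inl w => (G.args w).mapIdx (edgeTarget G P w)
  | .inr (w, k, w', p) =>
      chainEntry P w k w' p.dropLast :: List.replicate (j - 1) (.inl (p.getLastD w))

theorem rawArgs_inr_concat (w : V) (k : ℕ) (w' : V) (p : List V) (v : V) :
    rawArgs G P j (.inr (w, k, w', p ++ [v])) =
      chainEntry P w k w' p :: List.replicate (j - 1) (.inl v) := by
  simp [rawArgs]

theorem getElem?_rawArgs_inl (w : V) (k : ℕ) :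
    (rawArgs G P j (.inl w))[k]? = (G.args w)[k]?.map (edgeTarget G P w k) :=
  List.getElem?_mapIdx

theorem CorrectAP.gvp_of_mem_rawArgs (hc : CorrectAP i G P) {x e : V ⊕ (V × ℕ × V × List V)}
    (hx : GVP G P x) (he : e ∈ rawArgs G P j x) : GVP G P e := by
  rcases x with w | ⟨w, k, w', p⟩
  · obtain ⟨k, hk⟩ := List.mem_iff_getElem?.mp he
    rw [getElem?_rawArgs_inl, Option.map_eq_some_iff] at hk
    obtain ⟨w', hs, rfl⟩ := hk
    exact hc.gvp_edgeTarget hs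
  · obtain ⟨q, v, rfl⟩ := exists_eq_concat_of_gvp_inr hx
    obtain ⟨hs, hpre, hne, htop⟩ := gvp_inr_iff.mp hx
    rw [rawArgs_inr_concat, List.mem_cons] at he
    rcases he with rfl | he
    · exact gvp_chainEntry hs ((List.prefix_concat_iff.mp hpre).resolve_left hne)
        ((List.prefix_append q [v]).trans htop)
    · rw [List.eq_of_mem_replicate he]
      trivial

theorem getElem?_rawArgs_eq_some_iff (hj : j = 1 ∨ j = 2) (k : ℕ) (x y : GVert G P) :
    (rawArgs G P j x.val)[k]? = some y.val ↔ CSucc j G P k x y := by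
  have hx := x.property
  rcases hxv : x.val with w | ⟨w, k', w', p⟩
  · rw [csucc_inl_iff hxv, getElem?_rawArgs_inl, Option.map_eq_some_iff]
    simp only [TermGraph.Succ, eq_comm]
  · rw [hxv] at hx
    obtain ⟨q, v, rfl⟩ := exists_eq_concat_of_gvp_inr hx
    rw [csucc_inr_iff hxv, rawArgs_inr_concat]
    rcases hj with rfl | rfl <;> rcases k with _ | _ | k <;> simp [eq_comm]

theorem length_rawArgs (hj : 1 ≤ j) (x : GVert G P) :
    (rawArgs G P j x.val).length = ar4 i j (GLab G P x) := by
  obtain ⟨w | ⟨w, k, w', p⟩, hx⟩ := x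
  · simp only [rawArgs, List.length_mapIdx, G.args_len, GLab]
    cases G.lab w <;> rfl
  · simp only [rawArgs, List.length_cons, List.length_replicate, GLab, ar4]
    omega

open Classical in
variable (G P) in
/-- Only applied to raw vertices satisfying `GVP`; the fallback is a junk value. -/
noncomputable def liftVert (e : V ⊕ (V × ℕ × V × List V)) : GVert G P :=
  if h : GVP G P e then ⟨e, h⟩ else origVert G P G.root

theorem liftVert_of_gvp {e : V ⊕ (V × ℕ × V × List V)} (h : GVP G P e) :
    liftVert G P e = ⟨e, h⟩ :=
  dif_pos h

theorem liftVert_inl (v : V) : liftVert G P (.inl v) = origVert G P v :=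
  dif_pos trivial

theorem val_liftVert {e : V ⊕ (V × ℕ × V × List V)} (h : GVP G P e) :
    (liftVert G P e).val = e :=
  congrArg Subtype.val (liftVert_of_gvp h)

variable (G P) in
noncomputable def gArgs (j : ℕ) (x : GVert G P) : List (GVert G P) :=
  (rawArgs G P j x.val).map (liftVert G P)

theorem CorrectAP.getElem?_gArgs_eq_some_iff (hc : CorrectAP i G P) (k : ℕ)
    (x y : GVert G P) :
    (gArgs G P j x)[k]? = some y ↔ (rawArgs G P j x.val)[k]? = some y.val := by
  rw [gArgs, List.getElem?_map, Option.map_eq_some_iff]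
  constructor
  · rintro ⟨e, he, rfl⟩
    rwa [val_liftVert (hc.gvp_of_mem_rawArgs x.property (List.mem_of_getElem? he))]
  · intro h
    exact ⟨y.val, h, Subtype.ext (val_liftVert y.property)⟩

section Reachability

local notation "Reach" =>
  Relation.ReflTransGen (fun a b => b ∈ gArgs G P j a) (origVert G P G.root)

theorem CorrectAP.reach_chainEntry (hc : CorrectAP i G P) {w : V} {k : ℕ} {w' : V}
    {p q : List V} (hp : GVP G P (chainEntry P w k w' p))
    (hreach : Reach (liftVert G P (chainEntry P w k w' p)))
    (hq : P w' <+: q) (hqp : q <+: p) : Reach (liftVert G P (chainEntry P w k w' q)) := by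
  induction p using List.reverseRecOn with
  | nil => rwa [List.prefix_nil.mp hqp]
  | append_singleton l a ih =>
    rcases List.prefix_concat_iff.mp hqp with rfl | hql
    · exact hreach
    have hne : P w' ≠ l ++ [a] := fun h => by
      simpa [h] using (hq.trans hql).length_le
    rw [chainEntry_of_ne hne] at hp hreach
    have hmem : chainEntry P w k w' l ∈
        rawArgs G P j (liftVert G P (.inr (w, k, w', l ++ [a]))).val := by
      simp [val_liftVert hp, rawArgs_inr_concat]
    exact ih (hc.gvp_of_mem_rawArgs hp (val_liftVert hp ▸ hmem))
      (hreach.tail (List.mem_map_of_mem hmem)) hql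

theorem reach_edgeTarget {w : V} {k : ℕ} {w' : V}
    (hs : G.Succ k w w') (hreach : Reach (origVert G P w)) :
    Reach (liftVert G P (edgeTarget G P w k w')) :=
  hreach.tail <| List.mem_map_of_mem <| List.mem_of_getElem?
    ((getElem?_rawArgs_inl w k).trans (congrArg (Option.map _) hs))

theorem CorrectAP.reach_origVert (hc : CorrectAP i G P) (w : V) : Reach (origVert G P w) := by
  induction G.reach w with
  | refl => exact Relation.ReflTransGen.refl
  | tail _ hbc ih =>
    rename_i b c _
    obtain ⟨k, hs⟩ := TermGraph.exists_succ_of_mem_args hbc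
    have h := hc.reach_chainEntry (hc.gvp_edgeTarget hs) (reach_edgeTarget hs ih)
      (List.prefix_refl _) (hc.prefix_openPrefix hs)
    rwa [chainEntry_self, liftVert_inl] at h

theorem CorrectAP.reach_gArgs (hc : CorrectAP i G P) (x : GVert G P) : Reach x := by
  have hx := x.property
  rcases hxv : x.val with w | ⟨w, k, w', p⟩
  · exact (Subtype.ext hxv : x = origVert G P w) ▸ hc.reach_origVert w
  rw [hxv] at hx
  obtain ⟨hs, hpre, hne, htop⟩ := gvp_inr_iff.mp hx
  have h := hc.reach_chainEntry (j := j) (hc.gvp_edgeTarget hs)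
    (reach_edgeTarget hs (hc.reach_origVert w)) hpre htop
  rwa [chainEntry_of_ne hne, Subtype.ext ((val_liftVert hx).trans hxv.symm)] at h

end Reachability

theorem CorrectAP.exists_isGImage (hc : CorrectAP i G P) (hj : j = 1 ∨ j = 2) :
    ∃ G' : TermGraph Lab4 (ar4 i j) (GVert G P), IsGImage i j G P G' :=
  ⟨{ lab := GLab G P
     args := gArgs G P j
     root := origVert G P G.root
     args_len := fun x => (List.length_map _).trans (length_rawArgs (by omega) x)
     reach := hc.reach_gArgs },
   rfl, fun _ => rfl, fun k x y =>
     (hc.getElem?_gArgs_eq_some_iff k x y).trans (getElem?_rawArgs_eq_some_iff hj k x y)⟩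

end Construction

/-- Proposition 5.4: the mapping G_i^j, inserting chains of scope-delimiter vertices
    wherever the abstraction prefix decreases along an edge (with back-links for j=2),
    is well-defined from λ-ap-ho-term-graphs over Σλ^i to λ-term-graphs over Σλ^{i,j}:
    the image term graph exists and admits a correct abstraction-prefix function. -/
theorem gmap_well_defined :
    ∀ i ∈ ({0, 1} : Set ℕ), ∀ j ∈ ({1, 2} : Set ℕ),
      ∀ (V : Type) (G : LamApHoTG i V),
        ∃ G' : TermGraph Lab4 (ar4 i j) (GVert G.toTermGraph G.P),
          IsGImage i j G.toTermGraph G.P G' ∧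
          ∃ P' : GVert G.toTermGraph G.P → List (GVert G.toTermGraph G.P),
            CorrectAP4 i j G' P' := by
  intro i hi j hj V G
  have hi : i ≤ 1 := by rcases hi with rfl | rfl <;> simp
  obtain ⟨G', hG'⟩ := G.correct.exists_isGImage hj
  exact ⟨G', hG', _, G.correct.correctAP4_of_isGImage hi hG'⟩
end

section
/- None of the classes T_λ^1 (λ-term-graphs over Σλ^1, i.e. Σλ^1-term-graphs admitting a correct abstraction-prefix function) and T_λ^{i,j} (λ-term-graphs over Σλ^{i,j}) for i ∈ {0,1}, j ∈ {1,2} is closed under bisimulation: for each such class there exist term graphs G, G' over the respective signature with G bisimilar to G', G in the class, and G' not in the class. -/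
/-! Auxiliary counterexample constructions. -/

def nxt1 : Fin 2 → Fin 2 := ![1, 0]
def nxt2 : Fin 3 → Fin 3 := ![1, 2, 1]

/-- G : lam vertex 0 with body the var vertex 1, whose binder edge goes back to 0. -/
def CG1 : TermGraph Lab3 (ar3 1) (Fin 2) where
  lab := ![.lam, .var]
  args v := [nxt1 v]
  root := 0
  args_len v := by fin_cases v <;> rfl
  reach v := by
    fin_cases v
    · exact .refl
    · exact .single (by simp [nxt1])

/-- G' : lam 0 → var 1 → lam 2 → var 1 (shared). -/
def CG2 : TermGraph Lab3 (ar3 1) (Fin 3) where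
  lab := ![.lam, .var, .lam]
  args v := [nxt2 v]
  root := 0
  args_len v := by fin_cases v <;> rfl
  reach v := by
    fin_cases v
    · exact .refl
    · exact .single (by simp [nxt2])
    · exact .tail (b := 1) (.single (by simp [nxt2])) (by simp [nxt2])

/-- Infinite chain of λ-vertices. -/
def CGN (i j : ℕ) : TermGraph Lab4 (ar4 i j) ℕ where
  lab _ := .lam
  args n := [n + 1]
  root := 0
  args_len _ := rfl
  reach n := by
    induction n with
    | zero => exact .refl
    | succ m ih => exact .tail ih (by simp [TermGraph.Edge])

/-- Single λ-vertex with a self-loop. -/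
def CGU (i j : ℕ) : TermGraph Lab4 (ar4 i j) Unit where
  lab _ := .lam
  args _ := [()]
  root := ()
  args_len _ := rfl
  reach _ := .refl

lemma succ_singleton {L V : Type} {ar : L → ℕ} (G : TermGraph L ar V) {k : ℕ}
    {w w' x : V} (hargs : G.args w = [x]) (h : G.Succ k w w') : w' = x := by
  unfold TermGraph.Succ at h
  rw [hargs] at h
  rcases k with _ | k
  · simpa using h.symm
  · simp at h

/-- Proposition 6.1: none of the classes of λ-term-graphs over Σλ^1 and over Σλ^{i,j}
    (for i ∈ {0,1}, j ∈ {1,2}) is closed under bisimulation. -/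
theorem ltg_classes_not_closed_under_bisim :
    (∃ (V V' : Type) (G : TermGraph Lab3 (ar3 1) V) (G' : TermGraph Lab3 (ar3 1) V'),
      Bisim G G' ∧ (∃ P, CorrectAP 1 G P) ∧ ¬ ∃ P', CorrectAP 1 G' P') ∧
    (∀ i ∈ ({0, 1} : Set ℕ), ∀ j ∈ ({1, 2} : Set ℕ),
      ∃ (V V' : Type) (G : TermGraph Lab4 (ar4 i j) V)
        (G' : TermGraph Lab4 (ar4 i j) V'),
        Bisim G G' ∧ (∃ P, CorrectAP4 i j G P) ∧ ¬ ∃ P', CorrectAP4 i j G' P') := by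
  constructor
  · -- the Σλ^1 case
    refine ⟨Fin 2, Fin 3, CG1, CG2, ?_, ?_, ?_⟩
    · -- bisimulation
      refine ⟨{p : Fin 2 × Fin 3 | p = (0,0) ∨ p = (1,1) ∨ p = (0,2)}, ?_, ?_⟩
      · have memS : ∀ p : Fin 2 × Fin 3,
            (p = (0,0) ∨ p = (1,1) ∨ p = (0,2)) →
            ((nxt1 p.1, nxt2 p.2) = ((0:Fin 2),(0:Fin 3)) ∨
             (nxt1 p.1, nxt2 p.2) = (1,1) ∨ (nxt1 p.1, nxt2 p.2) = (0,2)) := by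
          rintro p (rfl | rfl | rfl) <;> simp [nxt1, nxt2]
        exact
          { lab := fun x => CG1.lab x.val.1
            args := fun x => [⟨(nxt1 x.val.1, nxt2 x.val.2), memS x.val x.prop⟩]
            root := ⟨(0,0), Or.inl rfl⟩
            args_len := fun x => by
              obtain ⟨⟨a, b⟩, h⟩ := x; fin_cases a <;> rfl
            reach := fun x => by
              obtain ⟨p, hp⟩ := x
              rcases hp with rfl | rfl | rfl
              · exact .refl
              · exact .single (by
                  simp only [TermGraph.Edge, List.mem_singleton]
                  exact Subtype.ext (by simp [nxt1, nxt2]))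
              · refine .tail (b := ⟨(1,1), Or.inr (Or.inl rfl)⟩) (.single ?_) ?_
                · simp only [TermGraph.Edge, List.mem_singleton]
                  exact Subtype.ext (by simp [nxt1, nxt2])
                · simp only [TermGraph.Edge, List.mem_singleton]
                  exact Subtype.ext (by simp [nxt1, nxt2]) }
      · refine ⟨rfl, ⟨fun v => rfl, fun v => rfl, rfl⟩, ⟨?_, fun v => rfl, rfl⟩⟩
        rintro ⟨p, rfl | rfl | rfl⟩ <;> rfl
    · -- CG1 has a correct abstraction-prefix function
      refine ⟨![[], [0]], rfl, ?_, ?_, ?_, ?_⟩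
      · intro w w₀ hl hs
        have hw : w = 0 := by
          fin_cases w
          · rfl
          · simp [CG1] at hl
        subst hw
        have : w₀ = nxt1 0 := succ_singleton CG1 rfl hs
        subst this
        simp [nxt1]
      · intro w wk k hl
        exfalso; fin_cases w <;> simp [CG1] at hl
      · intro w hl
        fin_cases w
        · simp [CG1] at hl
        · simp
      · intro _ w w₀ hl hs
        have hw : w = 1 := by
          fin_cases w
          · simp [CG1] at hl
          · rfl
        subst hw
        have : w₀ = nxt1 1 := succ_singleton CG1 rfl hs
        subst this
        exact ⟨rfl, by simp [nxt1]⟩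
    · -- CG2 has no correct abstraction-prefix function
      rintro ⟨P, hroot, hlam, happ, hvar, hvar1⟩
      have h01 : CG2.Succ 0 0 1 := rfl
      have h12 : CG2.Succ 0 1 2 := rfl
      have hpre : P 1 <+: P 0 ++ [0] := hlam 0 1 rfl h01
      have h0 : P 0 = [] := hroot
      rw [h0] at hpre
      have hne : P 1 ≠ [] := hvar 1 rfl
      have hP1 : P 1 = [0] := by
        obtain ⟨t, ht⟩ := hpre
        cases hP : P 1 with
        | nil => exact absurd hP hne
        | cons a l =>
          rw [hP] at ht
          simp at ht
          simp [hP, ht.1, ht.2.1]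
      obtain ⟨hl2, h2⟩ := hvar1 rfl 1 2 rfl h12
      rw [hP1] at h2
      cases hP2 : P 2 with
      | nil =>
        rw [hP2] at h2
        simp at h2
      | cons a l =>
        rw [hP2] at h2
        have := congrArg List.length h2
        simp at this
  · -- the Σλ^{i,j} cases
    intro i _ j _
    refine ⟨ℕ, Unit, CGN i j, CGU i j, ?_, ?_, ?_⟩
    · -- bisimulation
      refine ⟨Set.univ, ?_, ?_⟩
      · exact
          { lab := fun _ => .lam
            args := fun x => [⟨(x.val.1 + 1, ()), trivial⟩]
            root := ⟨(0, ()), trivial⟩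
            args_len := fun _ => rfl
            reach := fun x => by
              obtain ⟨⟨n, u⟩, h⟩ := x
              induction n with
              | zero => exact .refl
              | succ m ih =>
                refine .tail (b := ⟨(m, ()), trivial⟩) (ih trivial) ?_
                simp only [TermGraph.Edge, List.mem_singleton]
            }
      · exact ⟨rfl, ⟨fun v => rfl, fun v => rfl, rfl⟩,
          ⟨fun v => rfl, fun v => rfl, rfl⟩⟩
    · -- CGN has a correct abstraction-prefix function
      refine ⟨List.range, rfl, ?_, ?_, ?_, ?_, ?_, ?_⟩
      · intro w w₀ _ hs
        have : w₀ = w + 1 := succ_singleton (CGN i j) rfl hs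
        subst this
        rw [List.range_succ]
      · intro w wk k hl; exact absurd hl (by simp [CGN])
      · intro w hl; exact absurd hl (by simp [CGN])
      · intro _ w w₀ hl; exact absurd hl (by simp [CGN])
      · intro w w₀ hl; exact absurd hl (by simp [CGN])
      · intro _ w w₁ hl; exact absurd hl (by simp [CGN])
    · -- CGU has no correct abstraction-prefix function
      rintro ⟨P, hroot, hlam, -⟩
      have hs : (CGU i j).Succ 0 () () := rfl
      have := hlam () () rfl hs
      rw [hroot] at this
      simp [hroot] at this
end

section
/- For j ∈ {1,2}, the class T_λ^{0,j} of λ-term-graphs over Σλ^{0,j} is closed neither under functional bisimulation nor under converse functional bisimulation: there exist Σλ^{0,j}-term-graphs G₂ ⥲ G₁ ⥲ G₀ (homomorphisms in both steps) such that G₂ and G₀ are λ-term-graphs (admit correct abstraction-prefix functions) but G₁ is not. Moreover, for each of the classes T_λ^1 (over Σλ^1) and T_λ^{1,j} for j ∈ {1,2}, the class is not closed under converse functional bisimulation: there exist term graphs G₁ ⥲ G₀ over the respective signature such that G₀ is a λ-term-graph but G₁ is not. -/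
namespace CE

/-! ### Part 1: Σλ^{0,j} counterexamples -/

/-- G₁: app root 0, λ-vertices 1 and 2 both pointing to variable vertex 3. -/
def g1v (j : ℕ) : TermGraph Lab4 (ar4 0 j) (Fin 4) where
  lab := ![.app, .lam, .lam, .var]
  args := ![[1,2],[3],[3],[]]
  root := 0
  args_len := by intro v; fin_cases v <;> rfl
  reach := by
    intro v
    fin_cases v
    · exact .refl
    · exact .single (by decide)
    · exact .single (by decide)
    · exact .tail (.single (show (1:Fin 4) ∈ _ by decide)) (by decide)

/-- G₂: unfolding of G₁ with separate variable vertices. -/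
def g2v (j : ℕ) : TermGraph Lab4 (ar4 0 j) (Fin 5) where
  lab := ![.app, .lam, .lam, .var, .var]
  args := ![[1,2],[3],[4],[],[]]
  root := 0
  args_len := by intro v; fin_cases v <;> rfl
  reach := by
    intro v
    fin_cases v
    · exact .refl
    · exact .single (by decide)
    · exact .single (by decide)
    · exact .tail (.single (show (1:Fin 5) ∈ _ by decide)) (by decide)
    · exact .tail (.single (show (2:Fin 5) ∈ _ by decide)) (by decide)

/-- G₀: collapse of G₁ identifying the two λ-vertices. -/
def g0v (j : ℕ) : TermGraph Lab4 (ar4 0 j) (Fin 3) where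
  lab := ![.app, .lam, .var]
  args := ![[1,1],[2],[]]
  root := 0
  args_len := by intro v; fin_cases v <;> rfl
  reach := by
    intro v
    fin_cases v
    · exact .refl
    · exact .single (by decide)
    · exact .tail (.single (show (1:Fin 3) ∈ _ by decide)) (by decide)

lemma g2v_correct (j : ℕ) : CorrectAP4 0 j (g2v j) ![[],[],[],[1],[2]] := by
  refine ⟨rfl, ?_, ?_, ?_, ?_, ?_, ?_⟩
  · intro w w₀ hl hs
    fin_cases w <;> simp_all [TermGraph.Succ, g2v] <;> subst hs <;> rfl
  · intro w wk k hl hs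
    fin_cases w <;> simp_all [TermGraph.Succ, g2v]
    rcases k with _|_|k <;> simp_all <;> subst hs <;> rfl
  · intro w hl; fin_cases w <;> simp_all [g2v]
  · intro h; omega
  · intro w w₀ hl; fin_cases w <;> simp_all [g2v]
  · intro _ w w₁ hl; fin_cases w <;> simp_all [g2v]

lemma g0v_correct (j : ℕ) : CorrectAP4 0 j (g0v j) ![[],[],[1]] := by
  refine ⟨rfl, ?_, ?_, ?_, ?_, ?_, ?_⟩
  · intro w w₀ hl hs
    fin_cases w <;> simp_all [TermGraph.Succ, g0v] <;> subst hs <;> rfl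
  · intro w wk k hl hs
    fin_cases w <;> simp_all [TermGraph.Succ, g0v]
    rcases k with _|_|k <;> simp_all <;> subst hs <;> rfl
  · intro w hl; fin_cases w <;> simp_all [g0v]
  · intro h; omega
  · intro w w₀ hl; fin_cases w <;> simp_all [g0v]
  · intro _ w w₁ hl; fin_cases w <;> simp_all [g0v]

lemma g1v_not (j : ℕ) : ¬ ∃ P, CorrectAP4 0 j (g1v j) P := by
  rintro ⟨P, hr, hlam, happ, -, -, -, -⟩
  have h1 : P 1 = P 0 := happ 0 1 0 rfl rfl
  have h2 : P 2 = P 0 := happ 0 2 1 rfl rfl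
  have h3 : P 3 = P 1 ++ [1] := hlam 1 3 rfl rfl
  have h4 : P 3 = P 2 ++ [2] := hlam 2 3 rfl rfl
  rw [h1] at h3; rw [h2, h3] at h4
  simp at h4

/-! ### Part 2: Σλ^1 counterexample -/

def g1t : TermGraph Lab3 (ar3 1) (Fin 4) where
  lab := ![.app, .lam, .lam, .var]
  args := ![[1,2],[3],[3],[1]]
  root := 0
  args_len := by intro v; fin_cases v <;> rfl
  reach := by
    intro v
    fin_cases v
    · exact .refl
    · exact .single (by decide)
    · exact .single (by decide)
    · exact .tail (.single (show (1:Fin 4) ∈ _ by decide)) (by decide)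

def g0t : TermGraph Lab3 (ar3 1) (Fin 3) where
  lab := ![.app, .lam, .var]
  args := ![[1,1],[2],[1]]
  root := 0
  args_len := by intro v; fin_cases v <;> rfl
  reach := by
    intro v
    fin_cases v
    · exact .refl
    · exact .single (by decide)
    · exact .tail (.single (show (1:Fin 3) ∈ _ by decide)) (by decide)

lemma g0t_correct : CorrectAP 1 g0t ![[],[],[1]] := by
  refine ⟨rfl, ?_, ?_, ?_, ?_⟩
  · intro w w₀ hl hs
    fin_cases w <;> simp_all [TermGraph.Succ, g0t] <;> subst hs <;> simp
  · intro w wk k hl hs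
    fin_cases w <;> simp_all [TermGraph.Succ, g0t]
    rcases k with _|_|k <;> simp_all <;> subst hs <;> simp
  · intro w hl; fin_cases w <;> simp_all [g0t]
  · intro _ w w₀ hl hs
    fin_cases w <;> simp_all [TermGraph.Succ, g0t]
    subst hs; exact ⟨rfl, rfl⟩

lemma g1t_not : ¬ ∃ P, CorrectAP 1 g1t P := by
  rintro ⟨P, hr, hlam, happ, -, hvar1⟩
  have h1 : P 1 = [] := by
    have := happ 0 1 0 rfl rfl
    rw [show g1t.root = 0 from rfl] at hr
    rw [hr] at this; exact List.prefix_nil.mp this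
  have h2 : P 2 = [] := by
    have := happ 0 2 1 rfl rfl
    rw [show g1t.root = 0 from rfl] at hr
    rw [hr] at this; exact List.prefix_nil.mp this
  have h3 : P 3 = [1] := by
    have := (hvar1 rfl 3 1 rfl rfl).2
    rw [h1] at this; exact this.symm
  have h4 : P 3 <+: P 2 ++ [2] := hlam 2 3 rfl rfl
  rw [h2, h3] at h4
  simpa using h4

/-! ### Part 3: Σλ^{1,j} counterexamples -/

def g1q (j : ℕ) : TermGraph Lab4 (ar4 1 j) (Fin 4) where
  lab := ![.app, .lam, .lam, .var]
  args := ![[1,2],[3],[3],[1]]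
  root := 0
  args_len := by intro v; fin_cases v <;> rfl
  reach := by
    intro v
    fin_cases v
    · exact .refl
    · exact .single (by decide)
    · exact .single (by decide)
    · exact .tail (.single (show (1:Fin 4) ∈ _ by decide)) (by decide)

def g0q (j : ℕ) : TermGraph Lab4 (ar4 1 j) (Fin 3) where
  lab := ![.app, .lam, .var]
  args := ![[1,1],[2],[1]]
  root := 0
  args_len := by intro v; fin_cases v <;> rfl
  reach := by
    intro v
    fin_cases v
    · exact .refl
    · exact .single (by decide)
    · exact .tail (.single (show (1:Fin 3) ∈ _ by decide)) (by decide)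

lemma g0q_correct (j : ℕ) : CorrectAP4 1 j (g0q j) ![[],[],[1]] := by
  refine ⟨rfl, ?_, ?_, ?_, ?_, ?_, ?_⟩
  · intro w w₀ hl hs
    fin_cases w <;> simp_all [TermGraph.Succ, g0q] <;> subst hs <;> rfl
  · intro w wk k hl hs
    fin_cases w <;> simp_all [TermGraph.Succ, g0q]
    rcases k with _|_|k <;> simp_all <;> subst hs <;> rfl
  · intro w hl; fin_cases w <;> simp_all [g0q]
  · intro _ w w₀ hl hs
    fin_cases w <;> simp_all [TermGraph.Succ, g0q]
    subst hs; exact ⟨rfl, rfl⟩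
  · intro w w₀ hl; fin_cases w <;> simp_all [g0q]
  · intro _ w w₁ hl; fin_cases w <;> simp_all [g0q]

lemma g1q_not (j : ℕ) : ¬ ∃ P, CorrectAP4 1 j (g1q j) P := by
  rintro ⟨P, hr, hlam, happ, -, -, -, -⟩
  have h1 : P 1 = P 0 := happ 0 1 0 rfl rfl
  have h2 : P 2 = P 0 := happ 0 2 1 rfl rfl
  have h3 : P 3 = P 1 ++ [1] := hlam 1 3 rfl rfl
  have h4 : P 3 = P 2 ++ [2] := hlam 2 3 rfl rfl
  rw [h1] at h3; rw [h2, h3] at h4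
  simp at h4

end CE

/-- Proposition 6.2(i),(ii): for j ∈ {1,2} the class of λ-term-graphs over Σλ^{0,j} is
    closed neither under functional bisimulation nor under converse functional
    bisimulation; and the classes of λ-term-graphs over Σλ^1 and over Σλ^{1,j} are not
    closed under converse functional bisimulation. -/
theorem ltg_not_closed_funbisim_and_convfunbisim :
    (∀ j ∈ ({1, 2} : Set ℕ),
      ∃ (V₂ V₁ V₀ : Type) (G₂ : TermGraph Lab4 (ar4 0 j) V₂)
        (G₁ : TermGraph Lab4 (ar4 0 j) V₁) (G₀ : TermGraph Lab4 (ar4 0 j) V₀)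
        (h₂ : V₂ → V₁) (h₁ : V₁ → V₀),
        IsHom h₂ G₂ G₁ ∧ IsHom h₁ G₁ G₀ ∧
        (∃ P, CorrectAP4 0 j G₂ P) ∧ (∃ P, CorrectAP4 0 j G₀ P) ∧
        ¬ ∃ P, CorrectAP4 0 j G₁ P) ∧
    (∃ (V₁ V₀ : Type) (G₁ : TermGraph Lab3 (ar3 1) V₁)
        (G₀ : TermGraph Lab3 (ar3 1) V₀) (h : V₁ → V₀),
        IsHom h G₁ G₀ ∧ (∃ P, CorrectAP 1 G₀ P) ∧ ¬ ∃ P, CorrectAP 1 G₁ P) ∧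
    (∀ j ∈ ({1, 2} : Set ℕ),
      ∃ (V₁ V₀ : Type) (G₁ : TermGraph Lab4 (ar4 1 j) V₁)
        (G₀ : TermGraph Lab4 (ar4 1 j) V₀) (h : V₁ → V₀),
        IsHom h G₁ G₀ ∧ (∃ P, CorrectAP4 1 j G₀ P) ∧ ¬ ∃ P, CorrectAP4 1 j G₁ P) := by
  refine ⟨?_, ?_, ?_⟩
  · intro j _
    refine ⟨Fin 5, Fin 4, Fin 3, CE.g2v j, CE.g1v j, CE.g0v j, ![0,1,2,3,3], ![0,1,1,2],
      ⟨?_, ?_, ?_⟩, ⟨?_, ?_, ?_⟩, ⟨_, CE.g2v_correct j⟩, ⟨_, CE.g0v_correct j⟩, CE.g1v_not j⟩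
    · intro v; fin_cases v <;> rfl
    · intro v; fin_cases v <;> rfl
    · rfl
    · intro v; fin_cases v <;> rfl
    · intro v; fin_cases v <;> rfl
    · rfl
  · refine ⟨Fin 4, Fin 3, CE.g1t, CE.g0t, ![0,1,1,2], ⟨?_, ?_, ?_⟩,
      ⟨_, CE.g0t_correct⟩, CE.g1t_not⟩
    · intro v; fin_cases v <;> rfl
    · intro v; fin_cases v <;> rfl
    · rfl
  · intro j _
    refine ⟨Fin 4, Fin 3, CE.g1q j, CE.g0q j, ![0,1,1,2], ⟨?_, ?_, ?_⟩,
      ⟨_, CE.g0q_correct j⟩, CE.g1q_not j⟩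
    · intro v; fin_cases v <;> rfl
    · intro v; fin_cases v <;> rfl
    · rfl
end

section
/- Neither the class T_λ^{1,1} of λ-term-graphs over Σλ^{1,1} nor the class T_λ^{1,2} of λ-term-graphs over Σλ^{1,2} is closed under functional bisimulation: for each j ∈ {1,2} there exist Σλ^{1,j}-term-graphs G₁ and G₀ with a homomorphism from G₁ to G₀ such that G₁ admits a correct abstraction-prefix function (is a λ-term-graph) but G₀ does not. -/
section Counterexample

/-- G₀: 0 = @-root with args [1,2]; 1 = λ with body 2; 2 = λ with body 3;
    3 = variable bound by 2. Vertex 2 is shared: it is both the body of the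
    abstraction 1 (forcing prefix [1]) and an argument of the root application
    (forcing prefix []), so no correct abstraction-prefix function exists. -/
def CexG0 (j : ℕ) : TermGraph Lab4 (ar4 1 j) (Fin 4) where
  lab := ![.app, .lam, .lam, .var]
  args := ![[1, 2], [2], [3], [2]]
  root := 0
  args_len := by intro v; fin_cases v <;> rfl
  reach := by
    have e1 : (1 : Fin 4) ∈ ![([1, 2] : List (Fin 4)), [2], [3], [2]] 0 := by decide
    have e2 : (2 : Fin 4) ∈ ![([1, 2] : List (Fin 4)), [2], [3], [2]] 0 := by decide
    have e3 : (3 : Fin 4) ∈ ![([1, 2] : List (Fin 4)), [2], [3], [2]] 2 := by decide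
    intro v
    fin_cases v
    · exact .refl
    · exact .single e1
    · exact .single e2
    · exact .tail (.single e2) e3

/-- G₁: unshared version of `CexG0`: 0 = @ with args [1,4]; 1 = λ with body 2;
    2 = λ with body 3; 3 = var bound by 2; 4 = λ with body 5; 5 = var bound by 4. -/
def CexG1 (j : ℕ) : TermGraph Lab4 (ar4 1 j) (Fin 6) where
  lab := ![.app, .lam, .lam, .var, .lam, .var]
  args := ![[1, 4], [2], [3], [2], [5], [4]]
  root := 0
  args_len := by intro v; fin_cases v <;> rfl
  reach := by
    have e1 : (1 : Fin 6) ∈ ![([1, 4] : List (Fin 6)), [2], [3], [2], [5], [4]] 0 := by decide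
    have e2 : (2 : Fin 6) ∈ ![([1, 4] : List (Fin 6)), [2], [3], [2], [5], [4]] 1 := by decide
    have e3 : (3 : Fin 6) ∈ ![([1, 4] : List (Fin 6)), [2], [3], [2], [5], [4]] 2 := by decide
    have e4 : (4 : Fin 6) ∈ ![([1, 4] : List (Fin 6)), [2], [3], [2], [5], [4]] 0 := by decide
    have e5 : (5 : Fin 6) ∈ ![([1, 4] : List (Fin 6)), [2], [3], [2], [5], [4]] 4 := by decide
    intro v
    fin_cases v
    · exact .refl
    · exact .single e1
    · exact .tail (.single e1) e2
    · exact .tail (.tail (.single e1) e2) e3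
    · exact .single e4
    · exact .tail (.single e4) e5

theorem cexG1_lab (j : ℕ) :
    (CexG1 j).lab = ![.app, .lam, .lam, .var, .lam, .var] := rfl

theorem cexG1_args (j : ℕ) :
    (CexG1 j).args = ![[1, 4], [2], [3], [2], [5], [4]] := rfl

/-- The prefix function witnessing that `CexG1` is a λ-term-graph. -/
def CexP1 : Fin 6 → List (Fin 6) := ![[], [], [1], [1, 2], [], [4]]

theorem cexG1_correct (j : ℕ) : CorrectAP4 1 j (CexG1 j) CexP1 := by
  refine ⟨rfl, ?_, ?_, ?_, ?_, ?_, ?_⟩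
  · intro w w₀ hl hs
    simp only [TermGraph.Succ, cexG1_lab, cexG1_args] at hl hs
    fin_cases w
    · exact absurd hl (by decide)
    · injection hs with h; subst h; decide
    · injection hs with h; subst h; decide
    · exact absurd hl (by decide)
    · injection hs with h; subst h; decide
    · exact absurd hl (by decide)
  · intro w wk k hl hs
    simp only [TermGraph.Succ, cexG1_lab, cexG1_args] at hl hs
    fin_cases w
    case _ =>
      match k, hs with
      | 0, hs => injection hs with h; subst h; decide
      | 1, hs => injection hs with h; subst h; decide
      | (n+2), hs => injection hs
    all_goals exact absurd hl (by decide)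
  · intro w hl
    simp only [cexG1_lab] at hl
    fin_cases w
    · exact absurd hl (by decide)
    · exact absurd hl (by decide)
    · exact absurd hl (by decide)
    · decide
    · exact absurd hl (by decide)
    · decide
  · intro _ w w₀ hl hs
    simp only [TermGraph.Succ, cexG1_lab, cexG1_args] at hl hs
    simp only [cexG1_lab]
    fin_cases w
    · exact absurd hl (by decide)
    · exact absurd hl (by decide)
    · exact absurd hl (by decide)
    · injection hs with h; subst h; exact ⟨by decide, by decide⟩
    · exact absurd hl (by decide)
    · injection hs with h; subst h; exact ⟨by decide, by decide⟩
  · intro w w₀ hl _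
    simp only [cexG1_lab] at hl
    fin_cases w <;> exact absurd hl (by decide)
  · intro _ w w₁ hl _
    simp only [cexG1_lab] at hl
    fin_cases w <;> exact absurd hl (by decide)

end Counterexample

/-- Proposition 6.2(iii),(iv): for j ∈ {1,2}, the class of λ-term-graphs over Σλ^{1,j}
    is not closed under functional bisimulation. -/
theorem ltg_over_siglambda1j_not_closed_under_funbisim :
    ∀ j ∈ ({1, 2} : Set ℕ),
      ∃ (V₁ V₀ : Type) (G₁ : TermGraph Lab4 (ar4 1 j) V₁)
        (G₀ : TermGraph Lab4 (ar4 1 j) V₀) (h : V₁ → V₀),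
        IsHom h G₁ G₀ ∧ (∃ P, CorrectAP4 1 j G₁ P) ∧ ¬ ∃ P, CorrectAP4 1 j G₀ P := by
  intro j _
  refine ⟨Fin 6, Fin 4, CexG1 j, CexG0 j, ![0, 1, 2, 3, 2, 3], ?_, ⟨CexP1, cexG1_correct j⟩, ?_⟩
  · refine ⟨fun v => ?_, fun v => ?_, rfl⟩ <;> fin_cases v <;> rfl
  · rintro ⟨P, hroot, hlam, happ, -, -, -, -⟩
    have h1 : P 1 = P 0 := happ 0 1 0 rfl rfl
    have h2 : P 2 = P 0 := happ 0 2 1 rfl rfl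
    have h3 : P 2 = P 1 ++ [1] := hlam 1 2 rfl rfl
    have h0 : P 0 = [] := hroot
    rw [h1, h0] at h3
    rw [h2, h0] at h3
    simp at h3
end

section
/- Let G be a fully back-linked λ-term-graph over Σλ^{1,2} with vertex set V and (unique) correct abstraction-prefix function P, let G' be any term graph over Σλ^{1,2}, and let h be a homomorphism from G to G'. Then h maps equal vertices to vertices with prefix-images that agree: for all v₁, v₂ ∈ V, if h(v₁) = h(v₂) then h*(P(v₁)) = h*(P(v₂)), where h* is the letterwise extension of h to words over V. -/
namespace Lemma72

variable {V V' : Type}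

lemma succ_lt {G : TermGraph Lab4 (ar4 1 2) V} {k : ℕ} {a b : V}
    (hs : G.Succ k a b) : k < (G.args a).length :=
  (List.getElem?_eq_some_iff.mp hs).1

lemma edge_succ {G : TermGraph Lab4 (ar4 1 2) V} {a b : V}
    (he : G.Edge a b) : ∃ k : ℕ, G.Succ k a b :=
  List.mem_iff_getElem?.mp he

lemma hom_lab {G : TermGraph Lab4 (ar4 1 2) V} {G' : TermGraph Lab4 (ar4 1 2) V'}
    {h : V → V'} (hh : IsHom h G G') {a b : V} (hab : h a = h b) :
    G.lab a = G.lab b := by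
  rw [← hh.1 a, ← hh.1 b, hab]

lemma hom_step {G : TermGraph Lab4 (ar4 1 2) V} {G' : TermGraph Lab4 (ar4 1 2) V'}
    {h : V → V'} (hh : IsHom h G G') {a b c : V} {k : ℕ}
    (hab : h a = h b) (hs : G.Succ k a c) :
    ∃ d, G.Succ k b d ∧ h c = h d := by
  have hm : (G.args a).map h = (G.args b).map h := by
    rw [← hh.2.1 a, ← hh.2.1 b, hab]
  have h1 : ((G.args b).map h)[k]? = some (h c) := by
    rw [← hm, List.getElem?_map]
    have : (G.args a)[k]? = some c := hs
    rw [this]; rfl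
  rw [List.getElem?_map] at h1
  obtain ⟨d, hd, hdc⟩ := Option.map_eq_some_iff.mp h1
  exact ⟨d, hd, hdc.symm⟩

/-- Self-consistency of a correct abstraction-prefix function: any entry `u` of a
prefix `P w` has as its own prefix exactly the part of `P w` below `u`. -/
lemma sc {G : TermGraph Lab4 (ar4 1 2) V} {P : V → List V}
    (hcor : CorrectAP4 1 2 G P) :
    ∀ w q u r, P w = q ++ u :: r → P u = q := by
  intro w
  have hr := G.reach w
  induction hr with
  | refl =>
    intro q u r hq
    rw [hcor.1] at hq
    exact absurd hq (by simp)
  | @tail b c _ hedge ih =>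
    obtain ⟨k, hk⟩ := edge_succ hedge
    have hkl := succ_lt hk
    rw [G.args_len] at hkl
    intro q u r hq
    cases hl : G.lab b with
    | app =>
      exact ih q u r (by rw [← hcor.2.2.1 b c k hl hk, hq])
    | lam =>
      rw [hl] at hkl
      simp only [ar4] at hkl
      have k0 : k = 0 := by omega
      subst k0
      have hpc := hcor.2.1 b c hl hk
      rcases r.eq_nil_or_concat' with rfl | ⟨r', z, rfl⟩
      · have h2 : q ++ [u] = P b ++ [b] := by rw [← hq, hpc]
        obtain ⟨h3, h4⟩ := List.append_inj' h2 rfl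
        obtain rfl : u = b := by simpa using h4
        exact h3.symm
      · have h2 : P b ++ [b] = (q ++ u :: r') ++ [z] := by
          rw [← hpc, hq]; simp
        exact ih q u r' (List.append_inj' h2 rfl).1
    | var =>
      rw [hl] at hkl
      simp only [ar4] at hkl
      have k0 : k = 0 := by omega
      subst k0
      obtain ⟨-, hpc⟩ := hcor.2.2.2.2.1 rfl b c hl hk
      exact ih q u (r ++ [c]) (by rw [← hpc, hq]; simp)
    | del =>
      rw [hl] at hkl
      simp only [ar4] at hkl
      interval_cases k
      · obtain ⟨e, hpc⟩ := hcor.2.2.2.2.2.1 b c hl hk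
        exact ih q u (r ++ [e]) (by rw [← hpc, hq]; simp)
      · obtain ⟨-, hpc⟩ := hcor.2.2.2.2.2.2 rfl b c hl hk
        exact ih q u (r ++ [c]) (by rw [← hpc, hq]; simp)

/-- Walking in parallel from two h-identified vertices: if the path from `u₁` drops
below the prefix `P v₁`, then at some point a variable or delimiter vertex is met
while both current prefixes equal the original ones. -/
lemma walk {G : TermGraph Lab4 (ar4 1 2) V} {P : V → List V}
    {G' : TermGraph Lab4 (ar4 1 2) V'} {h : V → V'}
    (hcor : CorrectAP4 1 2 G P) (hh : IsHom h G G') (v₁ v₂ : V) :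
    ∀ (u₁ vv : V), Relation.ReflTransGen G.Edge u₁ vv →
      ∀ (u₂ : V) (s₁ s₂ : List V), h u₁ = h u₂ →
        P u₁ = P v₁ ++ s₁ → P u₂ = P v₂ ++ s₂ → s₁.map h = s₂.map h →
        (P vv).length < (P v₁).length →
        ∃ w₁ w₂, h w₁ = h w₂ ∧ P w₁ = P v₁ ∧ P w₂ = P v₂ ∧
          (G.lab w₁ = .var ∨ G.lab w₁ = .del) := by
  intro u₁ vv hwalk
  induction hwalk using Relation.ReflTransGen.head_induction_on with
  | refl =>
    intro u₂ s₁ s₂ _ hp1 _ _ hlt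
    exfalso
    rw [hp1, List.length_append] at hlt
    omega
  | @head a c hedge hrest ih =>
    intro u₂ s₁ s₂ hu hp1 hp2 hs hlt
    obtain ⟨k, hk⟩ := edge_succ hedge
    have hkl := succ_lt hk
    rw [G.args_len] at hkl
    have hlabeq := hom_lab hh hu
    obtain ⟨w', hw's, hw'h⟩ := hom_step hh hu hk
    cases hl : G.lab a with
    | lam =>
      rw [hl] at hkl
      simp only [ar4] at hkl
      have k0 : k = 0 := by omega
      subst k0
      have hpc := hcor.2.1 a c hl hk
      have hpw' := hcor.2.1 u₂ w' (by rw [← hlabeq]; exact hl) hw's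
      exact ih w' (s₁ ++ [a]) (s₂ ++ [u₂]) hw'h
        (by rw [hpc, hp1]; simp) (by rw [hpw', hp2]; simp)
        (by simp [hs, hu]) hlt
    | app =>
      have hpc := hcor.2.2.1 a c k hl hk
      have hpw' := hcor.2.2.1 u₂ w' k (by rw [← hlabeq]; exact hl) hw's
      exact ih w' s₁ s₂ hw'h (by rw [hpc, hp1]) (by rw [hpw', hp2]) hs hlt
    | var =>
      rcases s₁.eq_nil_or_concat' with rfl | ⟨s₁', x, rfl⟩
      · have hs2 : s₂ = [] := by
          have := hs.symm
          simpa using this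
        subst hs2
        exact ⟨a, u₂, hu, by simpa using hp1, by simpa using hp2, Or.inl hl⟩
      · rw [hl] at hkl
        simp only [ar4] at hkl
        have k0 : k = 0 := by omega
        subst k0
        obtain ⟨-, hpc⟩ := hcor.2.2.2.2.1 rfl a c hl hk
        obtain ⟨-, hpw'⟩ := hcor.2.2.2.2.1 rfl u₂ w' (by rw [← hlabeq]; exact hl) hw's
        rcases s₂.eq_nil_or_concat' with rfl | ⟨s₂', y, rfl⟩
        · simp at hs
        have e1 : P c = P v₁ ++ s₁' := by
          have h2 : P c ++ [c] = (P v₁ ++ s₁') ++ [x] := by rw [hpc, hp1]; simp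
          exact (List.append_inj' h2 rfl).1
        have e2 : P w' = P v₂ ++ s₂' := by
          have h2 : P w' ++ [w'] = (P v₂ ++ s₂') ++ [y] := by rw [hpw', hp2]; simp
          exact (List.append_inj' h2 rfl).1
        have e3 : s₁'.map h = s₂'.map h := by
          have h2 : s₁'.map h ++ [h x] = s₂'.map h ++ [h y] := by simpa using hs
          exact (List.append_inj' h2 rfl).1
        exact ih w' s₁' s₂' hw'h e1 e2 e3 hlt
    | del =>
      rcases s₁.eq_nil_or_concat' with rfl | ⟨s₁', x, rfl⟩
      · have hs2 : s₂ = [] := by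
          have := hs.symm
          simpa using this
        subst hs2
        exact ⟨a, u₂, hu, by simpa using hp1, by simpa using hp2, Or.inr hl⟩
      · rcases s₂.eq_nil_or_concat' with rfl | ⟨s₂', y, rfl⟩
        · simp at hs
        rw [hl] at hkl
        simp only [ar4] at hkl
        have hpops : (∃ e, P c ++ [e] = P a) ∧ (∃ e, P w' ++ [e] = P u₂) := by
          interval_cases k
          · exact ⟨hcor.2.2.2.2.2.1 a c hl hk,
              hcor.2.2.2.2.2.1 u₂ w' (by rw [← hlabeq]; exact hl) hw's⟩
          · exact ⟨⟨c, (hcor.2.2.2.2.2.2 rfl a c hl hk).2⟩,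
              ⟨w', (hcor.2.2.2.2.2.2 rfl u₂ w' (by rw [← hlabeq]; exact hl) hw's).2⟩⟩
        obtain ⟨⟨e₁, hpc⟩, ⟨e₂, hpw'⟩⟩ := hpops
        have f1 : P c = P v₁ ++ s₁' := by
          have h2 : P c ++ [e₁] = (P v₁ ++ s₁') ++ [x] := by rw [hpc, hp1]; simp
          exact (List.append_inj' h2 rfl).1
        have f2 : P w' = P v₂ ++ s₂' := by
          have h2 : P w' ++ [e₂] = (P v₂ ++ s₂') ++ [y] := by rw [hpw', hp2]; simp
          exact (List.append_inj' h2 rfl).1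
        have f3 : s₁'.map h = s₂'.map h := by
          have h2 : s₁'.map h ++ [h x] = s₂'.map h ++ [h y] := by simpa using hs
          exact (List.append_inj' h2 rfl).1
        exact ih w' s₁' s₂' hw'h f1 f2 f3 hlt

end Lemma72

/-- Lemma 7.2: if G is a fully back-linked λ-term-graph over Σλ^{1,2}, G' a term graph
    over Σλ^{1,2}, and h a homomorphism from G to G', then vertices identified by h
    have abstraction prefixes with equal images under h. -/
theorem fully_back_linked_prefix_images_agree :
    ∀ (V V' : Type) (G : TermGraph Lab4 (ar4 1 2) V) (P : V → List V),
      CorrectAP4 1 2 G P → FullyBackLinked G P →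
      ∀ (G' : TermGraph Lab4 (ar4 1 2) V') (h : V → V'),
        IsHom h G G' →
        ∀ v₁ v₂ : V, h v₁ = h v₂ → (P v₁).map h = (P v₂).map h := by
  intro V V' G P hcor hfbl G' h hh
  suffices H : ∀ n (v₁ v₂ : V), (P v₁).length + (P v₂).length ≤ n →
      h v₁ = h v₂ → (P v₁).map h = (P v₂).map h by
    intro v₁ v₂ hv
    exact H _ v₁ v₂ le_rfl hv
  intro n
  induction n with
  | zero =>
    intro v₁ v₂ hlen hv
    have h1 : P v₁ = [] := List.length_eq_zero_iff.mp (by omega)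
    have h2 : P v₂ = [] := List.length_eq_zero_iff.mp (by omega)
    rw [h1, h2]
  | succ n ih =>
    have oneSided : ∀ v₁ v₂ : V, (P v₁).length + (P v₂).length ≤ n + 1 →
        h v₁ = h v₂ → P v₁ ≠ [] → (P v₁).map h = (P v₂).map h := by
      intro v₁ v₂ hlen hv hne
      rcases (P v₁).eq_nil_or_concat' with hnil | ⟨p, v, hp⟩
      · exact absurd hnil hne
      have hreach : Relation.ReflTransGen G.Edge v₁ v := hfbl v₁ v p hp
      have hPv : P v = p := Lemma72.sc hcor v₁ p v [] hp
      have hlt : (P v).length < (P v₁).length := by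
        rw [hPv, hp, List.length_append]; simp
      obtain ⟨w₁, w₂, hw, hw1, hw2, hlab⟩ :=
        Lemma72.walk hcor hh v₁ v₂ v₁ v hreach v₂ [] [] hv (by simp) (by simp) rfl hlt
      have hlab2 := Lemma72.hom_lab hh hw
      rcases hlab with hvar | hdel
      · have hlen1 : 0 < (G.args w₁).length := by
          rw [G.args_len, hvar]; simp [ar4]
        obtain ⟨z₁, hz₁⟩ : ∃ z, G.Succ 0 w₁ z :=
          ⟨(G.args w₁)[0], List.getElem?_eq_getElem hlen1⟩
        obtain ⟨-, hz⟩ := hcor.2.2.2.2.1 rfl w₁ z₁ hvar hz₁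
        obtain ⟨z₂, hz₂s, hz₂h⟩ := Lemma72.hom_step hh hw hz₁
        obtain ⟨-, hz'⟩ := hcor.2.2.2.2.1 rfl w₂ z₂ (by rw [← hlab2]; exact hvar) hz₂s
        rw [hw1] at hz
        rw [hw2] at hz'
        have l1 : (P z₁).length + 1 = (P v₁).length := by
          rw [← hz, List.length_append]; simp
        have l2 : (P z₂).length + 1 = (P v₂).length := by
          rw [← hz', List.length_append]; simp
        have ihz := ih z₁ z₂ (by omega) hz₂h
        calc (P v₁).map h = (P z₁).map h ++ [h z₁] := by rw [← hz]; simp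
          _ = (P z₂).map h ++ [h z₂] := by rw [ihz, hz₂h]
          _ = (P v₂).map h := by rw [← hz']; simp
      · have hlen1 : 1 < (G.args w₁).length := by
          rw [G.args_len, hdel]; simp [ar4]
        obtain ⟨z₁, hz₁⟩ : ∃ z, G.Succ 1 w₁ z :=
          ⟨(G.args w₁)[1], List.getElem?_eq_getElem hlen1⟩
        obtain ⟨-, hz⟩ := hcor.2.2.2.2.2.2 rfl w₁ z₁ hdel hz₁
        obtain ⟨z₂, hz₂s, hz₂h⟩ := Lemma72.hom_step hh hw hz₁
        obtain ⟨-, hz'⟩ := hcor.2.2.2.2.2.2 rfl w₂ z₂ (by rw [← hlab2]; exact hdel) hz₂s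
        rw [hw1] at hz
        rw [hw2] at hz'
        have l1 : (P z₁).length + 1 = (P v₁).length := by
          rw [← hz, List.length_append]; simp
        have l2 : (P z₂).length + 1 = (P v₂).length := by
          rw [← hz', List.length_append]; simp
        have ihz := ih z₁ z₂ (by omega) hz₂h
        calc (P v₁).map h = (P z₁).map h ++ [h z₁] := by rw [← hz]; simp
          _ = (P z₂).map h ++ [h z₂] := by rw [ihz, hz₂h]
          _ = (P v₂).map h := by rw [← hz']; simp
    intro v₁ v₂ hlen hv
    rcases eq_or_ne (P v₁) [] with h1 | h1
    · rcases eq_or_ne (P v₂) [] with h2 | h2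
      · rw [h1, h2]
      · exact (oneSided v₂ v₁ (by omega) hv.symm h2).symm
    · exact oneSided v₁ v₂ hlen hv h1
end
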